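/- arXiv:2210.14856 — 3 statements merged into one kernel-verified Lean document; each statement's English description precedes it below -/
import Mathlib

section
/- Let S be an Arf numerical semigroup with multiplicity 3 and conductor s > 3 with s ≡ 2 (mod 3). Then S = ⟨3, s, s+2⟩, PF(S) = {s−3, s−1}, the unique RF-matrix of s−3 is the 3×3 matrix with rows (−1, 1, 0), ((s−5)/3, −1, 1), ((2s−1)/3, 0, −1), and the unique RF-matrix of s−1 is the 3×3 matrix with rows (−1, 0, 1), ((2s−1)/3, −1, 0), ((s+1)/3, 1, −1). -/
/-- `S ⊆ ℕ` is a numerical semigroup: contains `0`, closed under addition,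
and has finite complement in `ℕ`. -/
def IsNumericalSemigroup (S : Set ℕ) : Prop :=
  0 ∈ S ∧ (∀ a ∈ S, ∀ b ∈ S, a + b ∈ S) ∧ (Sᶜ).Finite

/-- `S` satisfies the Arf condition: for `x ≤ y` in `S`, `2y - x ∈ S`. -/
def IsArf (S : Set ℕ) : Prop :=
  ∀ x ∈ S, ∀ y ∈ S, x ≤ y → 2 * y - x ∈ S

/-- `m` is the multiplicity of `S`: the smallest nonzero element. -/
def HasMultiplicity (S : Set ℕ) (m : ℕ) : Prop :=
  m ∈ S ∧ m ≠ 0 ∧ ∀ n ∈ S, n ≠ 0 → m ≤ n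

/-- `s` is the conductor of `S`: the least `t` with `[t, ∞) ⊆ S`. -/
def HasConductor (S : Set ℕ) (s : ℕ) : Prop :=
  (∀ n, s ≤ n → n ∈ S) ∧ ∀ t, (∀ n, t ≤ n → n ∈ S) → s ≤ t

/-- The set of pseudo-Frobenius numbers of `S`. -/
def pseudoFrobeniusSet (S : Set ℕ) : Set ℕ :=
  {z | z ∉ S ∧ ∀ n ∈ S, n ≠ 0 → z + n ∈ S}

/-- `A` is a row-factorization (RF-) matrix of `f` with respect to generators `n`:
diagonal entries are `-1`, off-diagonal entries are nonnegative, and every row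
gives a representation of `f` in terms of the generators. -/
def IsRFMatrix {e : ℕ} (n : Fin e → ℕ) (f : ℤ) (A : Matrix (Fin e) (Fin e) ℤ) : Prop :=
  (∀ i, A i i = -1) ∧ (∀ i j, i ≠ j → 0 ≤ A i j) ∧
    (∀ i, f = ∑ j, A i j * (n j : ℤ))

/-!
Since `3 ∈ S` and `s - 1 ∉ S`, no element of `S` below `s` is congruent to `s - 1 ≡ 1` modulo `3`.
An element `x < s` with `x ≡ 2` is impossible as well: the Arf condition applied to `x ≤ x + 1`
puts `x + 2 ≡ 1` into `S`. Hence `S = 3ℕ ∪ [s, ∞) = ⟨3, s, s + 2⟩`, and `PF(S)` can be read off.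
Row `i` of an RF-matrix of `f` is a factorization of `f + nᵢ` over the two other generators; as
`f + nᵢ < 2s + 3`, the coefficients of `s` and `s + 2` are at most `2`, and then residues modulo `3`
leave a single choice.
-/

def IsNumericalSemigroup.toAddSubmonoid {S : Set ℕ} (h : IsNumericalSemigroup S) :
    AddSubmonoid ℕ where
  carrier := S
  add_mem' {a b} ha hb := h.2.1 a ha b hb
  zero_mem' := h.1

theorem HasConductor.sub_one_notMem {S : Set ℕ} {s : ℕ} (h : HasConductor S s) (hs : 0 < s) :
    s - 1 ∉ S := fun hmem => by
  have := h.2 (s - 1) fun n hn => (eq_or_lt_of_le hn).elim (· ▸ hmem) fun hlt => h.1 n (by omega)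
  omega

theorem IsArf.add_two_mul_mem {S : Set ℕ} (h : IsArf S) {x d : ℕ} (hx : x ∈ S)
    (hxd : x + d ∈ S) : x + 2 * d ∈ S := by
  simpa [show 2 * (x + d) - x = x + 2 * d by omega] using h x hx (x + d) hxd (by omega)

theorem AddSubmonoid.lt_of_mem_of_notMem_of_modEq {M : AddSubmonoid ℕ} {m x y : ℕ} (hm : m ∈ M)
    (hx : x ∈ M) (hy : y ∉ M) (hxy : x ≡ y [MOD m]) : y < x := by
  by_contra! hle
  obtain ⟨k, hk⟩ := (Nat.modEq_iff_dvd' hle).mp hxy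
  have hyx : y = x + k • m := by rw [smul_eq_mul, mul_comm, ← hk, Nat.add_sub_cancel' hle]
  exact hy (hyx ▸ add_mem hx (nsmul_mem hm k))

theorem IsNumericalSemigroup.mem_iff_of_isArf {S : Set ℕ} {s : ℕ} (hNS : IsNumericalSemigroup S)
    (hArf : IsArf S) (h3 : 3 ∈ S) (hcon : HasConductor S s) (hmod : s % 3 = 2) (n : ℕ) :
    n ∈ S ↔ n % 3 = 0 ∨ s ≤ n := by
  let M := hNS.toAddSubmonoid
  have mem_of_three_dvd : ∀ {x}, x % 3 = 0 → x ∈ S := fun hx => by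
    obtain ⟨k, rfl⟩ := Nat.dvd_of_mod_eq_zero hx
    have : k • 3 ∈ M := nsmul_mem h3 k
    rwa [smul_eq_mul, mul_comm] at this
  have le_of_mod_eq_one : ∀ x ∈ S, x % 3 = 1 → s ≤ x := fun x hx hx1 => by
    have := M.lt_of_mem_of_notMem_of_modEq h3 hx (hcon.sub_one_notMem (by omega))
      (by unfold Nat.ModEq; omega)
    omega
  refine ⟨fun hn => ?_, fun hn => hn.elim mem_of_three_dvd (hcon.1 n)⟩
  rcases (by omega : n % 3 = 0 ∨ n % 3 = 1 ∨ n % 3 = 2) with h | h | h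
  · exact .inl h
  · exact .inr (le_of_mod_eq_one n hn h)
  · have := le_of_mod_eq_one _ (hArf.add_two_mul_mem hn (mem_of_three_dvd (x := n + 1) (by omega)))
      (by omega)
    omega

theorem coe_closure_three_eq_setOf {s : ℕ} (hmod : s % 3 = 2) :
    (AddSubmonoid.closure ({3, s, s + 2} : Set ℕ) : Set ℕ) = {n | n % 3 = 0 ∨ s ≤ n} := by
  ext n
  refine ⟨fun hn => ?_, fun hn => ?_⟩
  · induction hn using AddSubmonoid.closure_induction with
    | mem x hx => rcases hx with rfl | rfl | rfl <;> simp
    | zero => simp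
    | add x y _ _ hx hy => simp only [Set.mem_ofPred_eq] at hx hy ⊢; omega
  · have three_mul_mem : ∀ k, 3 * k ∈ AddSubmonoid.closure ({3, s, s + 2} : Set ℕ) := fun k => by
      simpa [smul_eq_mul, mul_comm] using
        nsmul_mem (AddSubmonoid.subset_closure (by simp) : 3 ∈ AddSubmonoid.closure _) k
    have hgen : ∀ g ∈ ({3, s, s + 2} : Set ℕ), ∀ k,
        g + 3 * k ∈ AddSubmonoid.closure ({3, s, s + 2} : Set ℕ) :=
      fun g hg k => add_mem (AddSubmonoid.subset_closure hg) (three_mul_mem k)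
    rcases (by simp only [Set.mem_ofPred_eq] at hn; omega :
        n % 3 = 0 ∨ (n % 3 = 1 ∧ s ≤ n) ∨ (n % 3 = 2 ∧ s ≤ n)) with h | h | h
    · simpa [show 3 * (n / 3) = n by omega] using three_mul_mem (n / 3)
    · simpa [show s + 2 + 3 * ((n - s - 2) / 3) = n by omega] using
        hgen (s + 2) (by simp) ((n - s - 2) / 3)
    · simpa [show s + 3 * ((n - s) / 3) = n by omega] using hgen s (by simp) ((n - s) / 3)

theorem pseudoFrobeniusSet_setOf_mod_three_eq {s : ℕ} (hs : 3 < s) (hmod : s % 3 = 2) :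
    pseudoFrobeniusSet {n | n % 3 = 0 ∨ s ≤ n} = {s - 3, s - 1} := by
  ext z
  simp only [pseudoFrobeniusSet, Set.mem_ofPred_eq, Set.mem_insert_iff, Set.mem_singleton_iff]
  refine ⟨fun ⟨hz, hadd⟩ => ?_, fun hz => ⟨by omega, fun n hn hn0 => by omega⟩⟩
  have := hadd 3 (.inl rfl) (by norm_num)
  omega

theorem isRFMatrix_iff_eq_of_row_unique {e : ℕ} {n : Fin e → ℕ} {f : ℤ}
    {M : Matrix (Fin e) (Fin e) ℤ} (hM : IsRFMatrix n f M)
    (hrow : ∀ i (v : Fin e → ℤ), v i = -1 → (∀ j, i ≠ j → 0 ≤ v j) →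
      f = ∑ j, v j * (n j : ℤ) → v = M i)
    (A : Matrix (Fin e) (Fin e) ℤ) : IsRFMatrix n f A ↔ A = M := by
  refine ⟨fun ⟨hdiag, hnonneg, hsum⟩ => ?_, fun h => h ▸ hM⟩
  funext i
  exact hrow i (A i) (hdiag i) (hnonneg i) (hsum i)

theorem sum_mul_vecCons_three (v : Fin 3 → ℤ) (n₀ n₁ n₂ : ℕ) :
    ∑ j, v j * ((![n₀, n₁, n₂] j : ℕ) : ℤ) = v 0 * n₀ + v 1 * n₁ + v 2 * n₂ := by
  simp [Fin.sum_univ_three]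

theorem isRFMatrix_fin_three_iff {n₀ n₁ n₂ : ℕ} {f x₀₁ x₀₂ x₁₀ x₁₂ x₂₀ x₂₁ : ℤ}
    (h₀ : ∀ b c : ℤ, 0 ≤ b ∧ 0 ≤ c ∧ f + n₀ = b * n₁ + c * n₂ ↔ b = x₀₁ ∧ c = x₀₂)
    (h₁ : ∀ a c : ℤ, 0 ≤ a ∧ 0 ≤ c ∧ f + n₁ = a * n₀ + c * n₂ ↔ a = x₁₀ ∧ c = x₁₂)
    (h₂ : ∀ a b : ℤ, 0 ≤ a ∧ 0 ≤ b ∧ f + n₂ = a * n₀ + b * n₁ ↔ a = x₂₀ ∧ b = x₂₁)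
    (A : Matrix (Fin 3) (Fin 3) ℤ) :
    IsRFMatrix ![n₀, n₁, n₂] f A ↔ A = !![-1, x₀₁, x₀₂; x₁₀, -1, x₁₂; x₂₀, x₂₁, -1] := by
  obtain ⟨hx₀₁, hx₀₂, hf₀⟩ := (h₀ x₀₁ x₀₂).mpr ⟨rfl, rfl⟩
  obtain ⟨hx₁₀, hx₁₂, hf₁⟩ := (h₁ x₁₀ x₁₂).mpr ⟨rfl, rfl⟩
  obtain ⟨hx₂₀, hx₂₁, hf₂⟩ := (h₂ x₂₀ x₂₁).mpr ⟨rfl, rfl⟩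
  refine isRFMatrix_iff_eq_of_row_unique ⟨fun i => ?_, fun i j hij => ?_, fun i => ?_⟩
    (fun i v hi hv hf => ?_) A
  · fin_cases i <;> rfl
  · fin_cases i <;> fin_cases j <;> first | exact absurd rfl hij | assumption
  · rw [sum_mul_vecCons_three]
    fin_cases i
    · show f = -1 * (n₀ : ℤ) + x₀₁ * n₁ + x₀₂ * n₂; linarith
    · show f = x₁₀ * (n₀ : ℤ) + -1 * n₁ + x₁₂ * n₂; linarith
    · show f = x₂₀ * (n₀ : ℤ) + x₂₁ * n₁ + -1 * n₂; linarith
  · rw [sum_mul_vecCons_three] at hf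
    funext j
    fin_cases i <;> simp only [Fin.zero_eta, Fin.mk_one, Fin.reduceFinMk] at hi
    · obtain ⟨h, h'⟩ := (h₀ (v 1) (v 2)).mp
        ⟨hv 1 (by decide), hv 2 (by decide), by rw [hi] at hf; linarith⟩
      fin_cases j
      exacts [hi, h, h']
    · obtain ⟨h, h'⟩ := (h₁ (v 0) (v 2)).mp
        ⟨hv 0 (by decide), hv 2 (by decide), by rw [hi] at hf; linarith⟩
      fin_cases j
      exacts [h, hi, h']
    · obtain ⟨h, h'⟩ := (h₂ (v 0) (v 1)).mp
        ⟨hv 0 (by decide), hv 1 (by decide), by rw [hi] at hf; linarith⟩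
      fin_cases j
      exacts [h, h', hi]

section
variable {s : ℕ} (hs : 3 < s) (hmod : s % 3 = 2)
include hs hmod

theorem isRFMatrix_sub_three_iff (A : Matrix (Fin 3) (Fin 3) ℤ) :
    IsRFMatrix ![3, s, s + 2] ((s : ℤ) - 3) A ↔
      A = !![-1, 1, 0; ((s : ℤ) - 5) / 3, -1, 1; (2 * (s : ℤ) - 1) / 3, 0, -1] := by
  refine isRFMatrix_fin_three_iff ?_ ?_ ?_ A <;> intro x y <;> push_cast <;>
    refine ⟨fun ⟨hx, hy, h⟩ => ?_, by rintro ⟨rfl, rfl⟩; omega⟩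
  · have : x ≤ 1 := by nlinarith
    have : y ≤ 1 := by nlinarith
    interval_cases x <;> interval_cases y <;> omega
  · have : y ≤ 1 := by nlinarith
    interval_cases y <;> omega
  · have : y ≤ 2 := by nlinarith
    interval_cases y <;> omega

theorem isRFMatrix_sub_one_iff (A : Matrix (Fin 3) (Fin 3) ℤ) :
    IsRFMatrix ![3, s, s + 2] ((s : ℤ) - 1) A ↔
      A = !![-1, 0, 1; (2 * (s : ℤ) - 1) / 3, -1, 0; ((s : ℤ) + 1) / 3, 1, -1] := by
  refine isRFMatrix_fin_three_iff ?_ ?_ ?_ A <;> intro x y <;> push_cast <;>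
    refine ⟨fun ⟨hx, hy, h⟩ => ?_, by rintro ⟨rfl, rfl⟩; omega⟩
  · have : x ≤ 1 := by nlinarith
    have : y ≤ 1 := by nlinarith
    interval_cases x <;> interval_cases y <;> omega
  · have : y ≤ 1 := by nlinarith
    interval_cases y <;> omega
  · have : y ≤ 2 := by nlinarith
    interval_cases y <;> omega

end

/-- Arf numerical semigroup with multiplicity `3`, conductor `s > 3`,
`s ≡ 2 (mod 3)`: `S = ⟨3, s, s+2⟩`, `PF(S) = {s-3, s-1}`, and the unique RF-matrices
of `s-3` and `s-1` are as displayed. -/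
theorem arf_mult_three_mod_two (S : Set ℕ) (s : ℕ)
    (hNS : IsNumericalSemigroup S) (hArf : IsArf S)
    (hmul : HasMultiplicity S 3) (hcon : HasConductor S s)
    (hs : 3 < s) (hmod : s % 3 = 2) :
    S = (AddSubmonoid.closure ({3, s, s + 2} : Set ℕ) : Set ℕ) ∧
    pseudoFrobeniusSet S = {s - 3, s - 1} ∧
    (∀ A : Matrix (Fin 3) (Fin 3) ℤ,
      IsRFMatrix ![3, s, s + 2] ((s : ℤ) - 3) A ↔
        A = !![-1, 1, 0; ((s : ℤ) - 5) / 3, -1, 1; (2 * (s : ℤ) - 1) / 3, 0, -1]) ∧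
    (∀ A : Matrix (Fin 3) (Fin 3) ℤ,
      IsRFMatrix ![3, s, s + 2] ((s : ℤ) - 1) A ↔
        A = !![-1, 0, 1; (2 * (s : ℤ) - 1) / 3, -1, 0; ((s : ℤ) + 1) / 3, 1, -1]) := by
  have hS : S = {n | n % 3 = 0 ∨ s ≤ n} := Set.ext (hNS.mem_iff_of_isArf hArf hmul.1 hcon hmod)
  exact ⟨hS.trans (coe_closure_three_eq_setOf hmod).symm,
    hS ▸ pseudoFrobeniusSet_setOf_mod_three_eq hs hmod,
    isRFMatrix_sub_three_iff hs hmod, isRFMatrix_sub_one_iff hs hmod⟩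
end

section
/- Let S be an Arf numerical semigroup with multiplicity 5 and conductor s > 5 with s ≡ 4 (mod 5), of the form S = ⟨5, s, s+2, s+3, s+4⟩. Then PF(S) = {s−5, s−3, s−2, s−1}, and the unique RF-matrix of the pseudo-Frobenius number s−5 is the 5×5 matrix with rows (−1, 1, 0, 0, 0), ((s−9)/5, −1, 0, 0, 1), ((2s−3)/5, 0, −1, 0, 0), ((s−4)/5, 0, 1, −1, 0), ((s−4)/5, 0, 0, 1, −1). -/
theorem mem_closure_iff_of_mod_five_eq_four {s : ℕ} (hmod : s % 5 = 4) (n : ℕ) :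
    n ∈ AddSubmonoid.closure ({5, s, s + 2, s + 3, s + 4} : Set ℕ) ↔ n % 5 = 0 ∨ s ≤ n := by
  set T := AddSubmonoid.closure ({5, s, s + 2, s + 3, s + 4} : Set ℕ)
  constructor
  · intro hn
    induction hn using AddSubmonoid.closure_induction with
    | mem x hx =>
      simp only [Set.mem_insert_iff, Set.mem_singleton_iff] at hx
      omega
    | zero => simp
    | add x y _ _ hx hy => omega
  · have hmul : ∀ t, t * 5 ∈ T := fun t => by
      simpa using AddSubmonoid.nsmul_mem T (AddSubmonoid.subset_closure (by simp) : 5 ∈ T) t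
    intro h
    by_cases h0 : n % 5 = 0
    · simpa [Nat.div_mul_cancel (Nat.dvd_of_mod_eq_zero h0)] using hmul (n / 5)
    -- `n` is a generator in `[s, s + 4]` of the same residue, plus a multiple of `5`.
    have hgen : s + (n - s) % 5 ∈ T := AddSubmonoid.subset_closure (by
      simp only [Set.mem_insert_iff, Set.mem_singleton_iff]
      omega)
    have hn : n = s + (n - s) % 5 + (n - s) / 5 * 5 := by omega
    exact hn ▸ add_mem hgen (hmul _)

theorem pseudoFrobeniusSet_eq_of_mem_iff {S : Set ℕ} {s : ℕ} (hs : 5 < s) (hmod : s % 5 = 4)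
    (hS : ∀ n, n ∈ S ↔ n % 5 = 0 ∨ s ≤ n) :
    pseudoFrobeniusSet S = {s - 5, s - 3, s - 2, s - 1} := by
  ext z
  simp only [pseudoFrobeniusSet, Set.mem_ofPred_eq, Set.mem_insert_iff, Set.mem_singleton_iff,
    hS]
  constructor
  · rintro ⟨hz, hz5⟩
    have := hz5 5 (by omega) (by omega)
    omega
  · intro hz
    exact ⟨by omega, fun n hn hn0 => by omega⟩

theorem large_coeffs_eq_zero_or_single {x b₁ b₂ b₃ b₄ : ℤ} (hx : 0 < x)
    (h₁ : 0 ≤ b₁) (h₂ : 0 ≤ b₂) (h₃ : 0 ≤ b₃) (h₄ : 0 ≤ b₄)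
    (hlt : b₁ * x + b₂ * (x + 2) + b₃ * (x + 3) + b₄ * (x + 4) < 2 * x) :
    (b₁ = 0 ∧ b₂ = 0 ∧ b₃ = 0 ∧ b₄ = 0) ∨ (b₁ = 1 ∧ b₂ = 0 ∧ b₃ = 0 ∧ b₄ = 0) ∨
      (b₁ = 0 ∧ b₂ = 1 ∧ b₃ = 0 ∧ b₄ = 0) ∨ (b₁ = 0 ∧ b₂ = 0 ∧ b₃ = 1 ∧ b₄ = 0) ∨
      (b₁ = 0 ∧ b₂ = 0 ∧ b₃ = 0 ∧ b₄ = 1) := by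
  have hsum : b₁ + b₂ + b₃ + b₄ ≤ 1 := by
    by_contra! h
    nlinarith
  omega

theorem factorization_eq_of_lt_two_mul {x b₀ b₁ b₂ b₃ b₄ c₀ c₁ c₂ c₃ c₄ : ℤ}
    (hx : 0 < x) (hmod : x % 5 = 4) (hb₀ : 0 ≤ b₀)
    (hb₁ : 0 ≤ b₁) (hb₂ : 0 ≤ b₂) (hb₃ : 0 ≤ b₃) (hb₄ : 0 ≤ b₄)
    (hc₀ : 0 ≤ c₀) (hc₁ : 0 ≤ c₁) (hc₂ : 0 ≤ c₂) (hc₃ : 0 ≤ c₃) (hc₄ : 0 ≤ c₄)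
    (heq : b₀ * 5 + b₁ * x + b₂ * (x + 2) + b₃ * (x + 3) + b₄ * (x + 4) =
      c₀ * 5 + c₁ * x + c₂ * (x + 2) + c₃ * (x + 3) + c₄ * (x + 4))
    (hlt : c₀ * 5 + c₁ * x + c₂ * (x + 2) + c₃ * (x + 3) + c₄ * (x + 4) < 2 * x) :
    b₀ = c₀ ∧ b₁ = c₁ ∧ b₂ = c₂ ∧ b₃ = c₃ ∧ b₄ = c₄ := by
  -- the large parts `0, x, x + 2, x + 3, x + 4` are pairwise incongruent modulo `5`
  rcases large_coeffs_eq_zero_or_single hx hb₁ hb₂ hb₃ hb₄ (by nlinarith) with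
    ⟨rfl, rfl, rfl, rfl⟩ | ⟨rfl, rfl, rfl, rfl⟩ | ⟨rfl, rfl, rfl, rfl⟩ | ⟨rfl, rfl, rfl, rfl⟩ |
      ⟨rfl, rfl, rfl, rfl⟩ <;>
  rcases large_coeffs_eq_zero_or_single hx hc₁ hc₂ hc₃ hc₄ (by nlinarith) with
    ⟨rfl, rfl, rfl, rfl⟩ | ⟨rfl, rfl, rfl, rfl⟩ | ⟨rfl, rfl, rfl, rfl⟩ | ⟨rfl, rfl, rfl, rfl⟩ |
      ⟨rfl, rfl, rfl, rfl⟩ <;>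
  omega

theorem factorization_unique_of_lt_two_mul {s : ℕ} (hs : 0 < s) (hmod : s % 5 = 4)
    {b c : Fin 5 → ℤ} (hb : 0 ≤ b) (hc : 0 ≤ c)
    (heq : ∑ j, b j * ((![5, s, s + 2, s + 3, s + 4] : Fin 5 → ℕ) j : ℤ) =
      ∑ j, c j * ((![5, s, s + 2, s + 3, s + 4] : Fin 5 → ℕ) j : ℤ))
    (hlt : ∑ j, c j * ((![5, s, s + 2, s + 3, s + 4] : Fin 5 → ℕ) j : ℤ) < 2 * s) :
    b = c := by
  simp only [Fin.sum_univ_five, Fin.isValue, Matrix.cons_val, Nat.cast_add,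
    Nat.cast_ofNat] at heq hlt
  obtain ⟨h₀, h₁, h₂, h₃, h₄⟩ := factorization_eq_of_lt_two_mul (by omega) (by omega)
    (hb 0) (hb 1) (hb 2) (hb 3) (hb 4) (hc 0) (hc 1) (hc 2) (hc 3) (hc 4) heq hlt
  funext j
  fin_cases j <;> assumption

namespace IsRFMatrix

variable {e : ℕ} {n : Fin e → ℕ} {f : ℤ} {A : Matrix (Fin e) (Fin e) ℤ}

theorem nonneg_row_add_single (hA : IsRFMatrix n f A) (i : Fin e) : 0 ≤ A i + Pi.single i 1 := by
  intro j
  by_cases hji : j = i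
  · subst hji
    simp [hA.1 j]
  · simp [hji, hA.2.1 i j (Ne.symm hji)]

theorem sum_row_add_single (hA : IsRFMatrix n f A) (i : Fin e) :
    ∑ j, (A i + Pi.single i 1 : Fin e → ℤ) j * (n j : ℤ) = f + n i := by
  simp [add_mul, Finset.sum_add_distrib, Pi.single_apply, hA.2.2 i]

theorem eq_of_factorization_unique {B : Matrix (Fin e) (Fin e) ℤ}
    (hA : IsRFMatrix n f A) (hB : IsRFMatrix n f B)
    (huniq : ∀ i (b c : Fin e → ℤ), 0 ≤ b → 0 ≤ c →
      ∑ j, b j * (n j : ℤ) = f + n i → ∑ j, c j * (n j : ℤ) = f + n i → b = c) :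
    A = B :=
  Matrix.ext fun i j => congrFun (add_left_injective _ (huniq i _ _
    (hA.nonneg_row_add_single i) (hB.nonneg_row_add_single i)
    (hA.sum_row_add_single i) (hB.sum_row_add_single i))) j

end IsRFMatrix

theorem isRFMatrix_of_mod_five_eq_four {s : ℕ} (hs : 5 < s) (hmod : s % 5 = 4) :
    IsRFMatrix ![5, s, s + 2, s + 3, s + 4] ((s : ℤ) - 5)
      !![-1, 1, 0, 0, 0;
         ((s : ℤ) - 9) / 5, -1, 0, 0, 1;
         (2 * (s : ℤ) - 3) / 5, 0, -1, 0, 0;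
         ((s : ℤ) - 4) / 5, 0, 1, -1, 0;
         ((s : ℤ) - 4) / 5, 0, 0, 1, -1] := by
  refine ⟨fun i => by fin_cases i <;> rfl, fun i j hij => ?_, fun i => ?_⟩
  · fin_cases i <;> fin_cases j <;>
      simp only [Fin.zero_eta, Fin.mk_one, Fin.reduceFinMk, Fin.isValue, Matrix.of_apply,
        Matrix.cons_val] at hij ⊢ <;> omega
  · fin_cases i <;>
      simp only [Fin.zero_eta, Fin.mk_one, Fin.reduceFinMk, Fin.isValue, Matrix.of_apply,
        Matrix.cons_val, Fin.sum_univ_five, Nat.cast_add, Nat.cast_ofNat] <;> omega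

theorem arf_mult_five_mod_four_second_general (S : Set ℕ) (s : ℕ)
    (hs : 5 < s) (hmod : s % 5 = 4)
    (hS : S = (AddSubmonoid.closure ({5, s, s + 2, s + 3, s + 4} : Set ℕ) : Set ℕ)) :
    pseudoFrobeniusSet S = {s - 5, s - 3, s - 2, s - 1} ∧
    (∀ A : Matrix (Fin 5) (Fin 5) ℤ,
      IsRFMatrix ![5, s, s + 2, s + 3, s + 4] ((s : ℤ) - 5) A ↔
        A = !![-1, 1, 0, 0, 0;
               ((s : ℤ) - 9) / 5, -1, 0, 0, 1;
               (2 * (s : ℤ) - 3) / 5, 0, -1, 0, 0;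
               ((s : ℤ) - 4) / 5, 0, 1, -1, 0;
               ((s : ℤ) - 4) / 5, 0, 0, 1, -1]) := by
  have hmem : ∀ n, n ∈ S ↔ n % 5 = 0 ∨ s ≤ n := fun n =>
    hS ▸ mem_closure_iff_of_mod_five_eq_four hmod n
  have hM := isRFMatrix_of_mod_five_eq_four hs hmod
  refine ⟨pseudoFrobeniusSet_eq_of_mem_iff hs hmod hmem, fun A => ⟨fun hA => ?_, fun h => h ▸ hM⟩⟩
  refine hA.eq_of_factorization_unique hM fun i b c hb hc hbi hci => ?_
  -- `(s - 5) + nᵢ ≤ (s - 5) + (s + 4) < 2s`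
  refine factorization_unique_of_lt_two_mul (by omega) hmod hb hc (hbi.trans hci.symm) ?_
  rw [hci]
  fin_cases i <;>
    simp only [Fin.zero_eta, Fin.mk_one, Fin.reduceFinMk, Fin.isValue, Matrix.cons_val,
      Nat.cast_add, Nat.cast_ofNat] <;> omega

/-- Arf numerical semigroup with multiplicity `5`, conductor `s > 5`,
`s ≡ 4 (mod 5)`, of the form `S = ⟨5, s, s+2, s+3, s+4⟩`: then
`PF(S) = {s-5, s-3, s-2, s-1}` and the unique RF-matrix of `s-5` is as displayed. -/
theorem arf_mult_five_mod_four_second (S : Set ℕ) (s : ℕ)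
    (hNS : IsNumericalSemigroup S) (hArf : IsArf S)
    (hmul : HasMultiplicity S 5) (hcon : HasConductor S s)
    (hs : 5 < s) (hmod : s % 5 = 4)
    (hS : S = (AddSubmonoid.closure ({5, s, s + 2, s + 3, s + 4} : Set ℕ) : Set ℕ)) :
    pseudoFrobeniusSet S = {s - 5, s - 3, s - 2, s - 1} ∧
    (∀ A : Matrix (Fin 5) (Fin 5) ℤ,
      IsRFMatrix ![5, s, s + 2, s + 3, s + 4] ((s : ℤ) - 5) A ↔
        A = !![-1, 1, 0, 0, 0;
               ((s : ℤ) - 9) / 5, -1, 0, 0, 1;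
               (2 * (s : ℤ) - 3) / 5, 0, -1, 0, 0;
               ((s : ℤ) - 4) / 5, 0, 1, -1, 0;
               ((s : ℤ) - 4) / 5, 0, 0, 1, -1]) :=
  arf_mult_five_mod_four_second_general S s hs hmod hS
end

section
/- Let m ≥ 2 and let s be a positive multiple of m. The m×m integer matrix M whose first row is (−1, 0, …, 0, 1), whose second row is (2s/m, −1, 0, …, 0), and whose i-th row for 3 ≤ i ≤ m has first entry s/m, entry 1 in column i−1, entry −1 in column i, and 0 elsewhere, satisfies det M = (−1)^{m−1}(s−1); in particular |det M| = s−1. (This matrix is an RF-matrix of the Frobenius number s−1 of the Arf numerical semigroup S = ⟨m, s+1, …, s+m−1⟩.) -/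
/-!
Write `m = n + 2` and `s = m k`. The rows of the matrix telescope: their sum is `(s - 1) e₀`,
so every column but the first sums to zero. Adding all rows to the first one and expanding
along it leaves `s - 1` times the minor obtained by deleting the first row and column, which is
lower bidiagonal with diagonal `-1`.
-/

open Matrix

theorem Fin.sum_univ_castSucc_sub_succ {M : Type*} [AddCommGroup M] {n : ℕ}
    (f : Fin (n + 1) → M) :
    ∑ i : Fin n, (f i.castSucc - f i.succ) = f 0 - f (Fin.last n) := by
  induction n with
  | zero => simp
  | succ n ih =>
    rw [Fin.sum_univ_castSucc]
    simp only [Fin.succ_castSucc]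
    rw [ih (fun i => f i.castSucc)]
    simp

section
variable {R : Type*} [CommRing R]

/-- The matrix of the theorem for `m = n + 2` and `s / m = k`. -/
def arfRFMatrix (n : ℕ) (k : R) : Matrix (Fin (n + 2)) (Fin (n + 2)) R :=
  Matrix.of fun i j =>
    if (i : ℕ) = 0 then (if (j : ℕ) = 0 then -1 else if (j : ℕ) = n + 1 then 1 else 0)
    else if (i : ℕ) = 1 then (if (j : ℕ) = 0 then 2 * k else if (j : ℕ) = 1 then -1 else 0)
    else if (j : ℕ) = 0 then k
    else if (j : ℕ) + 1 = i then 1 else if (j : ℕ) = i then -1 else 0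

variable (n : ℕ) (k : R)

theorem arfRFMatrix_row_zero :
    (arfRFMatrix n k).row 0 = Pi.single 0 (-1) + Pi.single (Fin.last _) 1 := by
  funext j
  simp only [row_apply, arfRFMatrix, of_apply, Pi.add_apply, Pi.single_apply, Fin.ext_iff,
    Fin.val_zero, Fin.val_last]
  split_ifs <;> first | omega | simp_all

theorem arfRFMatrix_row_one : (arfRFMatrix n k).row 1 = Pi.single 0 (2 * k) - Pi.single 1 1 := by
  funext j
  simp only [row_apply, arfRFMatrix, of_apply, Pi.sub_apply, Pi.single_apply, Fin.ext_iff,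
    Fin.val_zero, Fin.val_one]
  split_ifs <;> first | omega | simp_all

theorem arfRFMatrix_row_succ_succ (r : Fin n) : (arfRFMatrix n k).row r.succ.succ =
    Pi.single 0 k + Pi.single r.castSucc.succ 1 - Pi.single r.succ.succ 1 := by
  funext j
  simp only [row_apply, arfRFMatrix, of_apply, Pi.add_apply, Pi.sub_apply, Pi.single_apply,
    Fin.ext_iff, Fin.val_zero, Fin.val_succ, Fin.val_castSucc]
  split_ifs <;> first | omega | simp_all

theorem sum_arfRFMatrix_row : ∑ i, (arfRFMatrix n k).row i = Pi.single 0 ((n + 2) * k - 1) := by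
  rw [Fin.sum_univ_succ, Fin.sum_univ_succ]
  simp only [Fin.succ_zero_eq_one, arfRFMatrix_row_zero, arfRFMatrix_row_one,
    arfRFMatrix_row_succ_succ, add_sub_assoc, Finset.sum_add_distrib, Finset.sum_const,
    Finset.card_univ, Fintype.card_fin, Fin.succ_last,
    Fin.sum_univ_castSucc_sub_succ fun i => Pi.single (M := fun _ => R) i.succ 1]
  have hcoeff : (-1 : R) + 2 * k + n • k = (n + 2) * k - 1 := by
    rw [nsmul_eq_mul]
    ring
  rw [← hcoeff, Pi.single_add, Pi.single_add, Pi.single_smul']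
  abel

theorem arfRFMatrix_apply_self (i : Fin (n + 2)) : arfRFMatrix n k i i = -1 := by
  simp only [arfRFMatrix, of_apply]
  split_ifs <;> first | omega | rfl

theorem arfRFMatrix_nonneg [PartialOrder R] [IsOrderedRing R] (hk : 0 ≤ k) {i j : Fin (n + 2)}
    (hij : i ≠ j) : 0 ≤ arfRFMatrix n k i j := by
  have hij : (i : ℕ) ≠ j := Fin.val_ne_of_ne hij
  simp only [arfRFMatrix, of_apply]
  split_ifs <;> first | omega | rfl | exact zero_le_one | exact hk | exact mul_nonneg zero_le_two hk

theorem det_arfRFMatrix : (arfRFMatrix n k).det = (-1) ^ (n + 1) * ((n + 2) * k - 1) := by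
  have hcol (j) :
      ∑ i, arfRFMatrix n k i j = Pi.single (M := fun _ => R) 0 ((n + 2) * k - 1) j := by
    rw [← sum_arfRFMatrix_row, Finset.sum_apply]
    rfl
  have hminor : ((arfRFMatrix n k).submatrix Fin.succ Fin.succ).IsLowerTriangular := by
    intro r c hrc
    have hrc : (r : ℕ) < c := hrc
    simp only [submatrix_apply, arfRFMatrix, of_apply, Fin.val_succ]
    split_ifs <;> first | omega | simp_all
  rw [det_eq_sum_column_mul_submatrix_succAbove_succAbove_det _ 0 0
      fun j hj => by rw [hcol, Pi.single_eq_of_ne hj],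
    hcol, Pi.single_eq_same, Fin.succAbove_zero, det_of_isLowerTriangular _ hminor]
  simp only [submatrix_apply, arfRFMatrix_apply_self, Finset.prod_const, Finset.card_univ,
    Fintype.card_fin, Fin.val_zero]
  ring

def arfGenerators (n : ℕ) (k : R) : Fin (n + 2) → R :=
  fun j => if (j : ℕ) = 0 then n + 2 else (n + 2) * k + j

theorem arfGenerators_zero : arfGenerators n k 0 = n + 2 := if_pos rfl

theorem arfGenerators_succ (j : Fin (n + 1)) :
    arfGenerators n k j.succ = (n + 2) * k + (j + 1) := by
  simp [arfGenerators]

theorem arfRFMatrix_mulVec_arfGenerators :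
    arfRFMatrix n k *ᵥ arfGenerators n k = fun _ => (n + 2) * k - 1 := by
  funext i
  rw [mulVec_apply]
  rcases Fin.eq_zero_or_eq_succ i with rfl | ⟨i, rfl⟩
  · rw [arfRFMatrix_row_zero, ← Fin.succ_last]
    simp only [add_dotProduct, single_dotProduct, arfGenerators_zero, arfGenerators_succ,
      Fin.val_last]
    ring
  rcases Fin.eq_zero_or_eq_succ i with rfl | ⟨r, rfl⟩
  · rw [Fin.succ_zero_eq_one, arfRFMatrix_row_one, ← Fin.succ_zero_eq_one]
    simp only [sub_dotProduct, single_dotProduct, arfGenerators_zero, arfGenerators_succ,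
      Fin.val_zero, Nat.cast_zero]
    ring
  · rw [arfRFMatrix_row_succ_succ]
    simp only [add_dotProduct, sub_dotProduct, single_dotProduct, arfGenerators_zero,
      arfGenerators_succ, Fin.val_castSucc, Fin.val_succ, Nat.cast_add, Nat.cast_one]
    ring

end

theorem isRFMatrix_arfRFMatrix (n k : ℕ) :
    IsRFMatrix (fun j : Fin (n + 2) => if (j : ℕ) = 0 then n + 2 else (n + 2) * k + (j : ℕ))
      (((n + 2) * k : ℕ) - 1 : ℤ) (arfRFMatrix n (k : ℤ)) := by
  refine ⟨arfRFMatrix_apply_self n _, fun i j hij => arfRFMatrix_nonneg n _ k.cast_nonneg hij,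
    fun i => ?_⟩
  have hgen : (fun j : Fin (n + 2) =>
      (((if (j : ℕ) = 0 then n + 2 else (n + 2) * k + (j : ℕ)) : ℕ) : ℤ)) =
      arfGenerators n (k : ℤ) := by
    funext j
    unfold arfGenerators
    split_ifs <;> push_cast <;> ring
  have := congrFun (arfRFMatrix_mulVec_arfGenerators n (k : ℤ)) i
  rw [← hgen, mulVec_apply_eq_sum] at this
  exact_mod_cast this.symm

/-- For `m ≥ 2` and `s` a positive multiple of `m`, the `m × m`
matrix with first row `(-1, 0, …, 0, 1)`, second row `(2s/m, -1, 0, …, 0)`, and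
`i`-th row (for `3 ≤ i ≤ m`) having first entry `s/m`, entry `1` in column `i-1`,
entry `-1` in column `i` and `0` elsewhere, has determinant `(-1)^(m-1) * (s-1)`;
in particular its determinant has absolute value `s-1`.  Moreover it is an
RF-matrix of the Frobenius number `s-1` with respect to the generators
`m, s+1, …, s+m-1` of `S = ⟨m, s+1, …, s+m-1⟩`. (Rows and columns are indexed by
`Fin m`; the paper's index `i ∈ {1, …, m}` corresponds to the Lean index `i - 1`.) -/
theorem arf_multiple_det (m s : ℕ) (hm : 2 ≤ m) (hs : 0 < s) (hdvd : m ∣ s)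
    (M : Matrix (Fin m) (Fin m) ℤ)
    (hM : M = Matrix.of fun i j : Fin m =>
      if (i : ℕ) = 0 then
        (if (j : ℕ) = 0 then (-1 : ℤ) else if (j : ℕ) = m - 1 then 1 else 0)
      else if (i : ℕ) = 1 then
        (if (j : ℕ) = 0 then 2 * (s : ℤ) / (m : ℤ)
         else if (j : ℕ) = 1 then -1 else 0)
      else
        (if (j : ℕ) = 0 then (s : ℤ) / (m : ℤ)
         else if (j : ℕ) + 1 = (i : ℕ) then 1
         else if (j : ℕ) = (i : ℕ) then -1 else 0)) :
    M.det = (-1) ^ (m - 1) * ((s : ℤ) - 1) ∧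
    |M.det| = (s : ℤ) - 1 ∧
    IsRFMatrix (fun j : Fin m => if (j : ℕ) = 0 then m else s + (j : ℕ))
      ((s : ℤ) - 1) M := by
  obtain ⟨k, rfl⟩ := hdvd
  obtain ⟨n, rfl⟩ : ∃ n, m = n + 2 := ⟨m - 2, by omega⟩
  have hm0 : (n + 2 : ℤ) ≠ 0 := by omega
  have hM' : M = arfRFMatrix n (k : ℤ) := by
    rw [hM]
    ext i j
    simp only [arfRFMatrix, of_apply, Nat.cast_mul, Nat.cast_add, Nat.cast_ofNat,
      Nat.add_one_sub_one, mul_left_comm (2 : ℤ), Int.mul_ediv_cancel_left _ hm0]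
  have hcast : (((n + 2) * k : ℕ) : ℤ) = (n + 2) * k := by push_cast; ring
  have hpos : (0 : ℤ) ≤ (n + 2) * k - 1 := by
    rw [← hcast]
    omega
  subst hM'
  refine ⟨?_, ?_, isRFMatrix_arfRFMatrix n k⟩
  · rw [det_arfRFMatrix, hcast, Nat.add_one_sub_one]
  · rw [det_arfRFMatrix, hcast, abs_mul, abs_pow, abs_neg, abs_one, one_pow, one_mul,
      abs_of_nonneg hpos]
end
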